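/- There exist positive constants K3, K4 such that for all ε1>0 and ε2>0, writing r=√(ε1²+ε2²), one has K3/r ≤ (R−F(ε1/ε2))/ε1 ≤ K4/r. -/

import Mathlib

/-!
With `ρ = ε₁/ε₂` one has `R - F(ρ) = ρ((R-P)ρ + (2R-S-T))/(1+ρ)²`, so
`(R - F(ε₁/ε₂))/ε₁ = ((R-P)ε₁ + (2R-S-T)ε₂)/(ε₁+ε₂)²`. The numerator divided by `ε₁+ε₂` is a
weighted average of the two positive numbers `R-P` and `2R-S-T`, and `ε₁+ε₂` is comparable to
`√(ε₁²+ε₂²)` within a factor `2`.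
-/

/-- The pay-off `F(ρ) = (Pρ² + (S+T)ρ + R)/(1+ρ)²` of ATFT against itself. -/
noncomputable def F (P S T R ρ : ℝ) : ℝ := (P * ρ ^ 2 + (S + T) * ρ + R) / (1 + ρ) ^ 2

theorem sub_F_div_div_eq (P S T R : ℝ) {x y : ℝ} (hx : 0 < x) (hy : 0 < y) :
    (R - F P S T R (x / y)) / x = ((R - P) * x + (2 * R - S - T) * y) / (x + y) ^ 2 := by
  have hxy : 0 < x + y := add_pos hx hy
  rw [F]
  field_simp
  ring

theorem min_le_mul_add_mul_div {a b x y : ℝ} (hx : 0 ≤ x) (hy : 0 ≤ y) (hxy : 0 < x + y) :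
    min a b ≤ (a * x + b * y) / (x + y) := by
  rw [le_div_iff₀ hxy]
  nlinarith [mul_le_mul_of_nonneg_right (min_le_left a b) hx,
    mul_le_mul_of_nonneg_right (min_le_right a b) hy]

theorem mul_add_mul_div_le_max {a b x y : ℝ} (hx : 0 ≤ x) (hy : 0 ≤ y) (hxy : 0 < x + y) :
    (a * x + b * y) / (x + y) ≤ max a b := by
  rw [div_le_iff₀ hxy]
  nlinarith [mul_le_mul_of_nonneg_right (le_max_left a b) hx,
    mul_le_mul_of_nonneg_right (le_max_right a b) hy]

theorem sqrt_sq_add_sq_le_add {x y : ℝ} (hx : 0 ≤ x) (hy : 0 ≤ y) :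
    √(x ^ 2 + y ^ 2) ≤ x + y :=
  Real.sqrt_le_iff.mpr ⟨add_nonneg hx hy, by nlinarith [mul_nonneg hx hy]⟩

theorem add_le_two_mul_sqrt_sq_add_sq (x y : ℝ) : x + y ≤ 2 * √(x ^ 2 + y ^ 2) := by
  have : (x + y) / 2 ≤ √(x ^ 2 + y ^ 2) :=
    Real.le_sqrt_of_sq_le (by nlinarith [sq_nonneg (x - y)])
  linarith

theorem stmt_2_general (T R P S : ℝ) (hRP : R > P)
    (hup : (S + T) / 2 < R) :
    ∃ K3 K4 : ℝ, 0 < K3 ∧ 0 < K4 ∧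
      ∀ ε1 ε2 : ℝ, 0 < ε1 → 0 < ε2 →
        K3 / Real.sqrt (ε1 ^ 2 + ε2 ^ 2) ≤ (R - F P S T R (ε1 / ε2)) / ε1 ∧
        (R - F P S T R (ε1 / ε2)) / ε1 ≤ K4 / Real.sqrt (ε1 ^ 2 + ε2 ^ 2) := by
  set a := R - P
  set b := 2 * R - S - T
  have ha : 0 < a := sub_pos.mpr hRP
  have hb : 0 < b := by linarith
  refine ⟨min a b / 2, max a b, by positivity, by positivity, fun ε1 ε2 h1 h2 => ?_⟩
  have hsum : 0 < ε1 + ε2 := add_pos h1 h2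
  set N := √(ε1 ^ 2 + ε2 ^ 2)
  have hN : 0 < N := Real.sqrt_pos.mpr (by positivity)
  set m := (a * ε1 + b * ε2) / (ε1 + ε2)
  have hmin : min a b ≤ m := min_le_mul_add_mul_div h1.le h2.le hsum
  have hmax : m ≤ max a b := mul_add_mul_div_le_max h1.le h2.le hsum
  have hm : 0 ≤ m := (lt_min ha hb).le.trans hmin
  have hkey : (R - F P S T R (ε1 / ε2)) / ε1 = m / (ε1 + ε2) := by
    rw [sub_F_div_div_eq P S T R h1 h2, sq, ← div_div]
  rw [hkey]
  constructor
  · calc min a b / 2 / N = min a b / (2 * N) := div_div _ _ _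
      _ ≤ m / (2 * N) := by gcongr
      _ ≤ m / (ε1 + ε2) := by gcongr; exact add_le_two_mul_sqrt_sq_add_sq ε1 ε2
  · calc m / (ε1 + ε2) ≤ m / N := by gcongr; exact sqrt_sq_add_sq_le_add h1.le h2.le
      _ ≤ max a b / N := by gcongr

theorem stmt_2 (T R P S : ℝ) (hTR : T > R) (hRP : R > P) (hPS : P > S)
    (hlow : P < (S + T) / 2) (hup : (S + T) / 2 < R) :
    ∃ K3 K4 : ℝ, 0 < K3 ∧ 0 < K4 ∧
      ∀ ε1 ε2 : ℝ, 0 < ε1 → 0 < ε2 →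
        K3 / Real.sqrt (ε1 ^ 2 + ε2 ^ 2) ≤ (R - F P S T R (ε1 / ε2)) / ε1 ∧
        (R - F P S T R (ε1 / ε2)) / ε1 ≤ K4 / Real.sqrt (ε1 ^ 2 + ε2 ^ 2) :=
  stmt_2_general T R P S hRP hup
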